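/- arXiv:2204.11047 — 6 statements merged into one kernel-verified Lean document; each statement's English description precedes it below -/
import Mathlib

section
/- For every a ∈ Cℓ(1,2), a·ā = ā·a = N(a) + 2T(a)e₇, where ā is the Clifford conjugate of a. -/
/-- The Clifford algebra `Cℓ(1,2)` as an 8-dimensional real vector space with
coordinates in the basis `e₀ = 1, e₁ = i₁, e₂ = i₂, e₃ = i₁i₂, e₄ = i₃,
e₅ = i₁i₃, e₆ = i₂i₃, e₇ = i₁i₂i₃`, where `i₁² = 1`, `i₂² = i₃² = -1` and the
generators anticommute. -/
@[ext] structure Cl12 where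
  x0 : ℝ
  x1 : ℝ
  x2 : ℝ
  x3 : ℝ
  x4 : ℝ
  x5 : ℝ
  x6 : ℝ
  x7 : ℝ

namespace Cl12

instance : Zero Cl12 := ⟨⟨0,0,0,0,0,0,0,0⟩⟩
instance : One Cl12 := ⟨⟨1,0,0,0,0,0,0,0⟩⟩
instance : Add Cl12 :=
  ⟨fun a b => ⟨a.x0+b.x0, a.x1+b.x1, a.x2+b.x2, a.x3+b.x3,
               a.x4+b.x4, a.x5+b.x5, a.x6+b.x6, a.x7+b.x7⟩⟩
instance : Neg Cl12 := ⟨fun a => ⟨-a.x0,-a.x1,-a.x2,-a.x3,-a.x4,-a.x5,-a.x6,-a.x7⟩⟩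
instance : Sub Cl12 := ⟨fun a b => a + -b⟩
instance : SMul ℝ Cl12 :=
  ⟨fun r a => ⟨r*a.x0, r*a.x1, r*a.x2, r*a.x3, r*a.x4, r*a.x5, r*a.x6, r*a.x7⟩⟩

/-- Multiplication in `Cℓ(1,2)`, from the multiplication table of the basis. -/
instance : Mul Cl12 := ⟨fun a b =>
  ⟨a.x0*b.x0 + a.x1*b.x1 - a.x2*b.x2 + a.x3*b.x3 - a.x4*b.x4 + a.x5*b.x5 - a.x6*b.x6 - a.x7*b.x7,
   a.x0*b.x1 + a.x1*b.x0 + a.x2*b.x3 - a.x3*b.x2 + a.x4*b.x5 - a.x5*b.x4 - a.x6*b.x7 - a.x7*b.x6,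
   a.x0*b.x2 + a.x1*b.x3 + a.x2*b.x0 - a.x3*b.x1 + a.x4*b.x6 - a.x5*b.x7 - a.x6*b.x4 - a.x7*b.x5,
   a.x0*b.x3 + a.x1*b.x2 - a.x2*b.x1 + a.x3*b.x0 - a.x4*b.x7 + a.x5*b.x6 - a.x6*b.x5 - a.x7*b.x4,
   a.x0*b.x4 + a.x1*b.x5 - a.x2*b.x6 + a.x3*b.x7 + a.x4*b.x0 - a.x5*b.x1 + a.x6*b.x2 + a.x7*b.x3,
   a.x0*b.x5 + a.x1*b.x4 + a.x2*b.x7 - a.x3*b.x6 - a.x4*b.x1 + a.x5*b.x0 + a.x6*b.x3 + a.x7*b.x2,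
   a.x0*b.x6 + a.x1*b.x7 + a.x2*b.x4 - a.x3*b.x5 - a.x4*b.x2 + a.x5*b.x3 + a.x6*b.x0 + a.x7*b.x1,
   a.x0*b.x7 + a.x1*b.x6 - a.x2*b.x5 + a.x3*b.x4 + a.x4*b.x3 - a.x5*b.x2 + a.x6*b.x1 + a.x7*b.x0⟩⟩

/-- The Clifford conjugate `ā`. -/
def conj (a : Cl12) : Cl12 := ⟨a.x0, -a.x1, -a.x2, -a.x3, -a.x4, -a.x5, -a.x6, a.x7⟩

/-- The "prime" involution `a'`. -/
def prime (a : Cl12) : Cl12 := ⟨a.x0, a.x1, -a.x2, a.x3, -a.x4, a.x5, -a.x6, -a.x7⟩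

/-- `N(a) = a₀² - a₁² + a₂² - a₃² + a₄² - a₅² + a₆² - a₇²`. -/
def N (a : Cl12) : ℝ := a.x0^2 - a.x1^2 + a.x2^2 - a.x3^2 + a.x4^2 - a.x5^2 + a.x6^2 - a.x7^2

/-- `T(a) = a₀a₇ + a₂a₅ - a₁a₆ - a₃a₄`. -/
def T (a : Cl12) : ℝ := a.x0*a.x7 + a.x2*a.x5 - a.x1*a.x6 - a.x3*a.x4

/-- `P(a) = N(a)² + 4T(a)²`. -/
def P (a : Cl12) : ℝ := N a ^ 2 + 4 * T a ^ 2

/-- The basis element `e₇ = i₁i₂i₃`. -/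
def e7 : Cl12 := ⟨0,0,0,0,0,0,0,1⟩

/-- The real scalar `r` as an element of `Cℓ(1,2)`. -/
def ofReal (r : ℝ) : Cl12 := ⟨r,0,0,0,0,0,0,0⟩

/-- The "real part" `Cre(a) = a₀ + a₇e₇`. -/
def Cre (a : Cl12) : Cl12 := ⟨a.x0, 0, 0, 0, 0, 0, 0, a.x7⟩

end Cl12

namespace Cl12
theorem mul_def (a b : Cl12) : a * b =
  ⟨a.x0*b.x0 + a.x1*b.x1 - a.x2*b.x2 + a.x3*b.x3 - a.x4*b.x4 + a.x5*b.x5 - a.x6*b.x6 - a.x7*b.x7,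
   a.x0*b.x1 + a.x1*b.x0 + a.x2*b.x3 - a.x3*b.x2 + a.x4*b.x5 - a.x5*b.x4 - a.x6*b.x7 - a.x7*b.x6,
   a.x0*b.x2 + a.x1*b.x3 + a.x2*b.x0 - a.x3*b.x1 + a.x4*b.x6 - a.x5*b.x7 - a.x6*b.x4 - a.x7*b.x5,
   a.x0*b.x3 + a.x1*b.x2 - a.x2*b.x1 + a.x3*b.x0 - a.x4*b.x7 + a.x5*b.x6 - a.x6*b.x5 - a.x7*b.x4,
   a.x0*b.x4 + a.x1*b.x5 - a.x2*b.x6 + a.x3*b.x7 + a.x4*b.x0 - a.x5*b.x1 + a.x6*b.x2 + a.x7*b.x3,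
   a.x0*b.x5 + a.x1*b.x4 + a.x2*b.x7 - a.x3*b.x6 - a.x4*b.x1 + a.x5*b.x0 + a.x6*b.x3 + a.x7*b.x2,
   a.x0*b.x6 + a.x1*b.x7 + a.x2*b.x4 - a.x3*b.x5 - a.x4*b.x2 + a.x5*b.x3 + a.x6*b.x0 + a.x7*b.x1,
   a.x0*b.x7 + a.x1*b.x6 - a.x2*b.x5 + a.x3*b.x4 + a.x4*b.x3 - a.x5*b.x2 + a.x6*b.x1 + a.x7*b.x0⟩ := rfl
theorem add_def (a b : Cl12) : a + b =
  ⟨a.x0+b.x0, a.x1+b.x1, a.x2+b.x2, a.x3+b.x3, a.x4+b.x4, a.x5+b.x5, a.x6+b.x6, a.x7+b.x7⟩ := rfl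
theorem smul_def (r : ℝ) (a : Cl12) : r • a =
  ⟨r*a.x0, r*a.x1, r*a.x2, r*a.x3, r*a.x4, r*a.x5, r*a.x6, r*a.x7⟩ := rfl
end Cl12

/-- For every `a ∈ Cℓ(1,2)`, `a·ā = ā·a = N(a) + 2T(a)e₇`. -/
theorem mul_conj (a : Cl12) :
    a * Cl12.conj a = Cl12.ofReal (Cl12.N a) + (2 * Cl12.T a) • Cl12.e7 ∧
    Cl12.conj a * a = Cl12.ofReal (Cl12.N a) + (2 * Cl12.T a) • Cl12.e7 := by
  constructor <;>
  · ext <;> simp only [Cl12.conj, Cl12.ofReal, Cl12.N, Cl12.T, Cl12.e7,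
      Cl12.mul_def, Cl12.add_def, Cl12.smul_def] <;> ring
end

section
/- For all a, b ∈ Cℓ(1,2), T(ab) = N(a)T(b) + N(b)T(a). -/
/-- For all `a, b ∈ Cℓ(1,2)`, `T(ab) = N(a)T(b) + N(b)T(a)`. -/
theorem T_mul (a b : Cl12) :
    Cl12.T (a * b) = Cl12.N a * Cl12.T b + Cl12.N b * Cl12.T a := by
  show Cl12.T ⟨_,_,_,_,_,_,_,_⟩ = _
  simp only [Cl12.T, Cl12.N]
  ring
end

section
/- For all a, b ∈ Cℓ(1,2), N(ab) = N(a)N(b) - 4T(a)T(b). -/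
/-- For all `a, b ∈ Cℓ(1,2)`, `N(ab) = N(a)N(b) - 4T(a)T(b)`. -/
theorem N_mul (a b : Cl12) :
    Cl12.N (a * b) = Cl12.N a * Cl12.N b - 4 * Cl12.T a * Cl12.T b := by
  show Cl12.N ⟨_,_,_,_,_,_,_,_⟩ = _
  simp only [Cl12.N, Cl12.T]
  ring
end

section
/- Let a ∈ Cℓ(1,2) be nonzero. Then the equations ax = 0 and a'ax = 0 (for x ∈ Cℓ(1,2)) have the same solution sets. -/
namespace Cl12

lemma mul_x0 (a b : Cl12) : (a*b).x0 = a.x0*b.x0 + a.x1*b.x1 - a.x2*b.x2 + a.x3*b.x3 - a.x4*b.x4 + a.x5*b.x5 - a.x6*b.x6 - a.x7*b.x7 := rfl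
lemma mul_x1 (a b : Cl12) : (a*b).x1 = a.x0*b.x1 + a.x1*b.x0 + a.x2*b.x3 - a.x3*b.x2 + a.x4*b.x5 - a.x5*b.x4 - a.x6*b.x7 - a.x7*b.x6 := rfl
lemma mul_x2 (a b : Cl12) : (a*b).x2 = a.x0*b.x2 + a.x1*b.x3 + a.x2*b.x0 - a.x3*b.x1 + a.x4*b.x6 - a.x5*b.x7 - a.x6*b.x4 - a.x7*b.x5 := rfl
lemma mul_x3 (a b : Cl12) : (a*b).x3 = a.x0*b.x3 + a.x1*b.x2 - a.x2*b.x1 + a.x3*b.x0 - a.x4*b.x7 + a.x5*b.x6 - a.x6*b.x5 - a.x7*b.x4 := rfl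
lemma mul_x4 (a b : Cl12) : (a*b).x4 = a.x0*b.x4 + a.x1*b.x5 - a.x2*b.x6 + a.x3*b.x7 + a.x4*b.x0 - a.x5*b.x1 + a.x6*b.x2 + a.x7*b.x3 := rfl
lemma mul_x5 (a b : Cl12) : (a*b).x5 = a.x0*b.x5 + a.x1*b.x4 + a.x2*b.x7 - a.x3*b.x6 - a.x4*b.x1 + a.x5*b.x0 + a.x6*b.x3 + a.x7*b.x2 := rfl
lemma mul_x6 (a b : Cl12) : (a*b).x6 = a.x0*b.x6 + a.x1*b.x7 + a.x2*b.x4 - a.x3*b.x5 - a.x4*b.x2 + a.x5*b.x3 + a.x6*b.x0 + a.x7*b.x1 := rfl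
lemma mul_x7 (a b : Cl12) : (a*b).x7 = a.x0*b.x7 + a.x1*b.x6 - a.x2*b.x5 + a.x3*b.x4 + a.x4*b.x3 - a.x5*b.x2 + a.x6*b.x1 + a.x7*b.x0 := rfl

lemma zero_x0 : (0:Cl12).x0 = 0 := rfl
lemma zero_x1 : (0:Cl12).x1 = 0 := rfl
lemma zero_x2 : (0:Cl12).x2 = 0 := rfl
lemma zero_x3 : (0:Cl12).x3 = 0 := rfl
lemma zero_x4 : (0:Cl12).x4 = 0 := rfl
lemma zero_x5 : (0:Cl12).x5 = 0 := rfl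
lemma zero_x6 : (0:Cl12).x6 = 0 := rfl
lemma zero_x7 : (0:Cl12).x7 = 0 := rfl

/-- standard dot product on coordinates -/
def dot (u v : Cl12) : ℝ :=
  u.x0*v.x0 + u.x1*v.x1 + u.x2*v.x2 + u.x3*v.x3 + u.x4*v.x4 + u.x5*v.x5 + u.x6*v.x6 + u.x7*v.x7

set_option maxHeartbeats 1000000 in
lemma dot_prime_mul (a u v : Cl12) : dot (prime a * u) v = dot u (a * v) := by
  simp only [dot, prime, mul_x0, mul_x1, mul_x2, mul_x3, mul_x4, mul_x5, mul_x6, mul_x7]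
  ring

lemma dot_mul_prime (a u v : Cl12) : dot (a * u) v = dot u (prime a * v) := by
  simp only [dot, prime, mul_x0, mul_x1, mul_x2, mul_x3, mul_x4, mul_x5, mul_x6, mul_x7]
  ring

set_option maxHeartbeats 1000000 in
lemma mul_assoc' (a b c : Cl12) : a * b * c = a * (b * c) := by
  ext <;> simp only [mul_x0, mul_x1, mul_x2, mul_x3, mul_x4, mul_x5, mul_x6, mul_x7] <;> ring

lemma mul_zero' (a : Cl12) : a * 0 = 0 := by
  ext <;> simp only [mul_x0, mul_x1, mul_x2, mul_x3, mul_x4, mul_x5, mul_x6, mul_x7,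
    zero_x0, zero_x1, zero_x2, zero_x3, zero_x4, zero_x5, zero_x6, zero_x7] <;> ring

lemma eq_zero_of_dot_self (u : Cl12) (h : dot u u = 0) : u = 0 := by
  simp only [dot] at h
  have n0 := mul_self_nonneg u.x0
  have n1 := mul_self_nonneg u.x1
  have n2 := mul_self_nonneg u.x2
  have n3 := mul_self_nonneg u.x3
  have n4 := mul_self_nonneg u.x4
  have n5 := mul_self_nonneg u.x5
  have n6 := mul_self_nonneg u.x6
  have n7 := mul_self_nonneg u.x7
  ext
  · show u.x0 = 0; exact mul_self_eq_zero.mp (by linarith)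
  · show u.x1 = 0; exact mul_self_eq_zero.mp (by linarith)
  · show u.x2 = 0; exact mul_self_eq_zero.mp (by linarith)
  · show u.x3 = 0; exact mul_self_eq_zero.mp (by linarith)
  · show u.x4 = 0; exact mul_self_eq_zero.mp (by linarith)
  · show u.x5 = 0; exact mul_self_eq_zero.mp (by linarith)
  · show u.x6 = 0; exact mul_self_eq_zero.mp (by linarith)
  · show u.x7 = 0; exact mul_self_eq_zero.mp (by linarith)

end Cl12

/-- For nonzero `a ∈ Cℓ(1,2)`, the equations `ax = 0` and `a'ax = 0` have the
same solutions. -/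
theorem same_solutions (a : Cl12) (ha : a ≠ 0) :
    ∀ x : Cl12, a * x = 0 ↔ Cl12.prime a * a * x = 0 := by
  intro x
  constructor
  · intro hx
    rw [Cl12.mul_assoc', hx, Cl12.mul_zero']
  · intro hx
    rw [Cl12.mul_assoc'] at hx
    apply Cl12.eq_zero_of_dot_self
    have h := Cl12.dot_mul_prime a x (a * x)
    rw [hx] at h
    simp only [Cl12.dot, Cl12.zero_x0, Cl12.zero_x1, Cl12.zero_x2, Cl12.zero_x3,
      Cl12.zero_x4, Cl12.zero_x5, Cl12.zero_x6, Cl12.zero_x7] at h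
    rw [Cl12.dot]
    linarith [h]
end

section
/- Let a ∈ Cℓ(1,2) be nonzero with P(a) = 0, and let K = a₀² + a₂² + a₄² + a₆². Then T₁² + T₃² + T₅² = K², where T₁ = a₀a₁ - a₂a₃ - a₄a₅ + a₆a₇, T₃ = a₀a₃ + a₁a₂ + a₄a₇ + a₅a₆, T₅ = a₀a₅ + a₁a₄ - a₂a₇ - a₃a₆. -/
/-- For nonzero `a ∈ Cℓ(1,2)` with `P(a) = 0` and `K = a₀² + a₂² + a₄² + a₆²`,
one has `T₁² + T₃² + T₅² = K²`. -/
theorem T1_T3_T5 (a : Cl12) (ha : a ≠ 0) (hP : Cl12.P a = 0) :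
    (a.x0*a.x1 - a.x2*a.x3 - a.x4*a.x5 + a.x6*a.x7) ^ 2 +
    (a.x0*a.x3 + a.x1*a.x2 + a.x4*a.x7 + a.x5*a.x6) ^ 2 +
    (a.x0*a.x5 + a.x1*a.x4 - a.x2*a.x7 - a.x3*a.x6) ^ 2 =
      (a.x0^2 + a.x2^2 + a.x4^2 + a.x6^2) ^ 2 := by
  have hN : Cl12.N a = 0 := by
    unfold Cl12.P at hP; nlinarith [sq_nonneg (Cl12.N a), sq_nonneg (Cl12.T a)]
  have hT : Cl12.T a = 0 := by
    unfold Cl12.P at hP; nlinarith [sq_nonneg (Cl12.N a), sq_nonneg (Cl12.T a)]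
  unfold Cl12.N at hN
  unfold Cl12.T at hT
  linear_combination (-(a.x0^2+a.x2^2+a.x4^2+a.x6^2))*hN -
    (a.x0*a.x7 + a.x2*a.x5 - a.x1*a.x6 - a.x3*a.x4)*hT
end

section
/- Two elements a, b ∈ Cℓ(1,2), neither lying in the center ℝ + ℝe₇, are similar (i.e., there exists q ∈ Cℓ(1,2) with P(q) ≠ 0 such that qa = bq) if and only if Cre(a) = Cre(b), N(a) = N(b), and T(a) = T(b). -/
namespace Cl12Aux

open Matrix Complex

/-- The representation of `Cℓ(1,2)` on `M₂(ℂ)`. -/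
noncomputable def phi (a : Cl12) : Matrix (Fin 2) (Fin 2) ℂ :=
  !![⟨a.x0 + a.x1, a.x7 + a.x6⟩, ⟨a.x2 + a.x3, a.x5 + a.x4⟩;
     ⟨-a.x2 + a.x3, -a.x5 + a.x4⟩, ⟨a.x0 - a.x1, a.x7 - a.x6⟩]

noncomputable def psi (A : Matrix (Fin 2) (Fin 2) ℂ) : Cl12 :=
  ⟨(A 0 0).re/2 + (A 1 1).re/2, (A 0 0).re/2 - (A 1 1).re/2,
   (A 0 1).re/2 - (A 1 0).re/2, (A 0 1).re/2 + (A 1 0).re/2,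
   (A 0 1).im/2 + (A 1 0).im/2, (A 0 1).im/2 - (A 1 0).im/2,
   (A 0 0).im/2 - (A 1 1).im/2, (A 0 0).im/2 + (A 1 1).im/2⟩

lemma mul_def (a b : Cl12) : a * b =
  ⟨a.x0*b.x0 + a.x1*b.x1 - a.x2*b.x2 + a.x3*b.x3 - a.x4*b.x4 + a.x5*b.x5 - a.x6*b.x6 - a.x7*b.x7,
   a.x0*b.x1 + a.x1*b.x0 + a.x2*b.x3 - a.x3*b.x2 + a.x4*b.x5 - a.x5*b.x4 - a.x6*b.x7 - a.x7*b.x6,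
   a.x0*b.x2 + a.x1*b.x3 + a.x2*b.x0 - a.x3*b.x1 + a.x4*b.x6 - a.x5*b.x7 - a.x6*b.x4 - a.x7*b.x5,
   a.x0*b.x3 + a.x1*b.x2 - a.x2*b.x1 + a.x3*b.x0 - a.x4*b.x7 + a.x5*b.x6 - a.x6*b.x5 - a.x7*b.x4,
   a.x0*b.x4 + a.x1*b.x5 - a.x2*b.x6 + a.x3*b.x7 + a.x4*b.x0 - a.x5*b.x1 + a.x6*b.x2 + a.x7*b.x3,
   a.x0*b.x5 + a.x1*b.x4 + a.x2*b.x7 - a.x3*b.x6 - a.x4*b.x1 + a.x5*b.x0 + a.x6*b.x3 + a.x7*b.x2,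
   a.x0*b.x6 + a.x1*b.x7 + a.x2*b.x4 - a.x3*b.x5 - a.x4*b.x2 + a.x5*b.x3 + a.x6*b.x0 + a.x7*b.x1,
   a.x0*b.x7 + a.x1*b.x6 - a.x2*b.x5 + a.x3*b.x4 + a.x4*b.x3 - a.x5*b.x2 + a.x6*b.x1 + a.x7*b.x0⟩ := rfl

lemma phi_mul (a b : Cl12) : phi (a * b) = phi a * phi b := by
  rw [mul_def]
  ext i j
  fin_cases i <;> fin_cases j <;>
    simp [phi, Matrix.mul_apply, Fin.sum_univ_two, Complex.ext_iff, Complex.mul_re,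
      Complex.mul_im] <;> (try constructor) <;> (first | ring | trivial)

lemma psi_phi (a : Cl12) : psi (phi a) = a := by
  ext <;> simp [phi, psi] <;> ring

lemma phi_psi (A : Matrix (Fin 2) (Fin 2) ℂ) : phi (psi A) = A := by
  ext i j
  fin_cases i <;> fin_cases j <;>
    simp [phi, psi, Complex.ext_iff] <;> (try constructor) <;> (first | ring | trivial)

lemma det_phi (a : Cl12) : (phi a).det = ⟨Cl12.N a, 2 * Cl12.T a⟩ := by
  simp [phi, Matrix.det_fin_two, Cl12.N, Cl12.T, Complex.ext_iff, Complex.mul_re,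
    Complex.mul_im] <;> constructor <;> ring

lemma P_eq (a : Cl12) : Cl12.P a = Complex.normSq ((phi a).det) := by
  rw [det_phi]
  simp [Cl12.P, Complex.normSq]
  ring

lemma trace_phi (a : Cl12) : (phi a).trace = ⟨2 * a.x0, 2 * a.x7⟩ := by
  simp [phi, Matrix.trace_fin_two, Complex.ext_iff] <;> constructor <;> ring

end Cl12Aux

namespace Cl12Aux

open Matrix Complex

/-- Companion matrix of `x² - t x + d`. -/
noncomputable def comp (t d : ℂ) : Matrix (Fin 2) (Fin 2) ℂ := !![0, -d; 1, t]

lemma similar_companion (A : Matrix (Fin 2) (Fin 2) ℂ)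
    (h : ¬ (A 0 1 = 0 ∧ A 1 0 = 0 ∧ A 0 0 = A 1 1)) :
    ∃ Q : Matrix (Fin 2) (Fin 2) ℂ, Q.det ≠ 0 ∧ Q * comp A.trace A.det = A * Q := by
  by_cases hγ : A 1 0 = 0
  · by_cases hβ : A 0 1 = 0
    · have hαδ : A 0 0 ≠ A 1 1 := fun hc => h ⟨hβ, hγ, hc⟩
      refine ⟨!![1, A 0 0; 1, A 1 1], ?_, ?_⟩
      · simp [Matrix.det_fin_two]
        intro hc
        exact hαδ ((sub_eq_zero.1 hc).symm)
      · ext i j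
        fin_cases i <;> fin_cases j <;>
          simp [comp, Matrix.mul_apply, Fin.sum_univ_two, Matrix.trace_fin_two,
            Matrix.det_fin_two, hβ, hγ] <;> ring
    · refine ⟨!![0, A 0 1; 1, A 1 1], ?_, ?_⟩
      · simp [Matrix.det_fin_two, hβ]
      · ext i j
        fin_cases i <;> fin_cases j <;>
          simp [comp, Matrix.mul_apply, Fin.sum_univ_two, Matrix.trace_fin_two,
            Matrix.det_fin_two] <;> ring
  · refine ⟨!![1, A 0 0; 0, A 1 0], ?_, ?_⟩
    · simp [Matrix.det_fin_two, hγ]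
    · ext i j
      fin_cases i <;> fin_cases j <;>
        simp [comp, Matrix.mul_apply, Fin.sum_univ_two, Matrix.trace_fin_two,
          Matrix.det_fin_two] <;> ring

lemma matrix_similar (A B : Matrix (Fin 2) (Fin 2) ℂ)
    (hA : ¬ (A 0 1 = 0 ∧ A 1 0 = 0 ∧ A 0 0 = A 1 1))
    (hB : ¬ (B 0 1 = 0 ∧ B 1 0 = 0 ∧ B 0 0 = B 1 1))
    (ht : A.trace = B.trace) (hd : A.det = B.det) :
    ∃ Q : Matrix (Fin 2) (Fin 2) ℂ, Q.det ≠ 0 ∧ Q * A = B * Q := by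
  obtain ⟨Q₁, hd₁, hQ₁⟩ := similar_companion A hA
  obtain ⟨Q₂, hd₂, hQ₂⟩ := similar_companion B hB
  rw [ht, hd] at hQ₁
  haveI : Invertible Q₁ := Q₁.invertibleOfIsUnitDet (isUnit_iff_ne_zero.2 hd₁)
  refine ⟨Q₂ * ⅟Q₁, ?_, ?_⟩
  · rw [Matrix.det_mul]
    have h1 : (⅟Q₁).det * Q₁.det = 1 := by
      rw [← Matrix.det_mul, invOf_mul_self, Matrix.det_one]
    intro hc
    rcases mul_eq_zero.1 hc with hc | hc
    · exact hd₂ hc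
    · rw [hc, zero_mul] at h1; exact zero_ne_one h1
  · have key : ⅟Q₁ * A = comp B.trace B.det * ⅟Q₁ := by
      calc ⅟Q₁ * A = ⅟Q₁ * A * (Q₁ * ⅟Q₁) := by rw [mul_invOf_self, mul_one]
        _ = ⅟Q₁ * (A * Q₁) * ⅟Q₁ := by noncomm_ring
        _ = ⅟Q₁ * (Q₁ * comp B.trace B.det) * ⅟Q₁ := by rw [hQ₁]
        _ = (⅟Q₁ * Q₁) * comp B.trace B.det * ⅟Q₁ := by noncomm_ring
        _ = comp B.trace B.det * ⅟Q₁ := by rw [invOf_mul_self, one_mul]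
    calc Q₂ * ⅟Q₁ * A = Q₂ * (⅟Q₁ * A) := by noncomm_ring
      _ = Q₂ * comp B.trace B.det * ⅟Q₁ := by rw [key]; noncomm_ring
      _ = B * Q₂ * ⅟Q₁ := by rw [hQ₂]
      _ = B * (Q₂ * ⅟Q₁) := by noncomm_ring

end Cl12Aux

namespace Cl12Aux

open Matrix Complex

lemma add_def (a b : Cl12) : a + b =
    ⟨a.x0+b.x0, a.x1+b.x1, a.x2+b.x2, a.x3+b.x3,
     a.x4+b.x4, a.x5+b.x5, a.x6+b.x6, a.x7+b.x7⟩ := rfl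

lemma smul_def (r : ℝ) (a : Cl12) : r • a =
    ⟨r*a.x0, r*a.x1, r*a.x2, r*a.x3, r*a.x4, r*a.x5, r*a.x6, r*a.x7⟩ := rfl

lemma nonscalar (a : Cl12) (ha : ¬ ∃ r s : ℝ, a = Cl12.ofReal r + s • Cl12.e7) :
    ¬ (phi a 0 1 = 0 ∧ phi a 1 0 = 0 ∧ phi a 0 0 = phi a 1 1) := by
  rintro ⟨h1, h2, h3⟩
  apply ha
  refine ⟨a.x0, a.x7, ?_⟩
  simp [phi, Complex.ext_iff] at h1 h2 h3
  ext <;> simp [Cl12.ofReal, Cl12.e7, add_def, smul_def] <;> linarith [h1.1, h1.2, h2.1, h2.2, h3.1, h3.2]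

end Cl12Aux

theorem similar_iff' (a b : Cl12)
    (ha : ¬ ∃ r s : ℝ, a = Cl12.ofReal r + s • Cl12.e7)
    (hb : ¬ ∃ r s : ℝ, b = Cl12.ofReal r + s • Cl12.e7) :
    (∃ q : Cl12, Cl12.P q ≠ 0 ∧ q * a = b * q) ↔
      (Cl12.Cre a = Cl12.Cre b ∧ Cl12.N a = Cl12.N b ∧ Cl12.T a = Cl12.T b) := by
  open Cl12Aux in
  constructor
  · rintro ⟨q, hP, hqa⟩
    have hQ : phi q * phi a = phi b * phi q := by rw [← phi_mul, ← phi_mul, hqa]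
    have hdQ : (phi q).det ≠ 0 := by
      intro hc
      apply hP
      rw [P_eq, hc]
      simp
    haveI : Invertible (phi q) := (phi q).invertibleOfIsUnitDet (isUnit_iff_ne_zero.2 hdQ)
    have htr : (phi a).trace = (phi b).trace := by
      have hA : phi a = ⅟(phi q) * (phi b * phi q) := by
        rw [← hQ, ← mul_assoc, invOf_mul_self, one_mul]
      rw [hA, Matrix.trace_mul_comm, mul_assoc, mul_invOf_self, mul_one]
    have hdet : (phi a).det = (phi b).det := by
      have hdd := congrArg Matrix.det hQ
      rw [Matrix.det_mul, Matrix.det_mul] at hdd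
      exact mul_left_cancel₀ hdQ (by rw [hdd]; ring)
    rw [trace_phi, trace_phi, Complex.ext_iff] at htr
    simp only [] at htr
    rw [det_phi, det_phi, Complex.ext_iff] at hdet
    simp only [] at hdet
    refine ⟨?_, ?_, ?_⟩
    · have e0 : a.x0 = b.x0 := by
        linarith [htr.1]
      have e7 : a.x7 = b.x7 := by
        linarith [htr.2]
      simp [Cl12.Cre, e0, e7]
    · linarith [hdet.1]
    · linarith [hdet.2]
  · rintro ⟨hCre, hN, hT⟩
    have h0 : a.x0 = b.x0 := by
      have := congrArg Cl12.x0 hCre; simpa [Cl12.Cre] using this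
    have h7 : a.x7 = b.x7 := by
      have := congrArg Cl12.x7 hCre; simpa [Cl12.Cre] using this
    obtain ⟨Q, hdQ, hQ⟩ := matrix_similar (phi a) (phi b) (nonscalar a ha) (nonscalar b hb)
      (by rw [trace_phi, trace_phi, h0, h7])
      (by rw [det_phi, det_phi, hN, hT])
    refine ⟨psi Q, ?_, ?_⟩
    · rw [P_eq, phi_psi]
      intro hc
      exact hdQ (Complex.normSq_eq_zero.1 hc)
    · have heq : phi (psi Q * a) = phi (b * psi Q) := by
        rw [phi_mul, phi_mul, phi_psi, hQ]
      have := congrArg psi heq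
      rwa [psi_phi, psi_phi] at this



/-- Two elements of `Cℓ(1,2)` not lying in the center `ℝ + ℝe₇` are similar
(`qa = bq` for some `q` with `P(q) ≠ 0`) iff `Cre(a) = Cre(b)`, `N(a) = N(b)`
and `T(a) = T(b)`. -/
theorem similar_iff (a b : Cl12)
    (ha : ¬ ∃ r s : ℝ, a = Cl12.ofReal r + s • Cl12.e7)
    (hb : ¬ ∃ r s : ℝ, b = Cl12.ofReal r + s • Cl12.e7) :
    (∃ q : Cl12, Cl12.P q ≠ 0 ∧ q * a = b * q) ↔
      (Cl12.Cre a = Cl12.Cre b ∧ Cl12.N a = Cl12.N b ∧ Cl12.T a = Cl12.T b) := by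
  exact similar_iff' a b ha hb
end
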